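/- arXiv:1608.01616 — 3 statements merged into one kernel-verified Lean document; each statement's English description precedes it below -/
import Mathlib

section
/- Let B be a split extension of C by a nilpotent bimodule E, and let M be a finitely generated C-module. If f : P → M is a projective cover in mod C, then f ⊗_C 1_B : P ⊗_C B → M ⊗_C B is a projective cover in mod B. -/
open CategoryTheory CategoryTheory.Limits

universe u
noncomputable section

section SplitExt

variable {k : Type u} [Field k] {B C : Type u} [Ring B] [Ring C] [Algebra k B] [Algebra k C]

/-- The natural isomorphism `𝟭 (mod C) ≅ res_π ⋙ res_σ` coming from `π ∘ σ = id`. -/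
def splitUnitIso (σ : C →ₐ[k] B) (π : B →ₐ[k] C) (hsplit : π.comp σ = AlgHom.id k C) :
    𝟭 (ModuleCat.{u} C) ≅
      ModuleCat.restrictScalars π.toRingHom ⋙ ModuleCat.restrictScalars σ.toRingHom :=
  (ModuleCat.restrictScalarsId' (π.toRingHom.comp σ.toRingHom)
      (RingHom.ext fun x => DFunLike.congr_fun hsplit x)).symm ≪≫
    ModuleCat.restrictScalarsComp' σ.toRingHom π.toRingHom (π.toRingHom.comp σ.toRingHom) rfl

/-- For a split algebra extension `π : B → C`, `σ : C → B` with `π ∘ σ = id`, and a left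
adjoint `ind` of restriction of scalars along `σ` (an induction functor `- ⊗_C B`),
the canonical morphism of `B`-modules `M ⊗_C B ⟶ M`, where on the right `M` is viewed as a
`B`-module by restriction of scalars along `π`. -/
def canMap (σ : C →ₐ[k] B) (π : B →ₐ[k] C) (hsplit : π.comp σ = AlgHom.id k C)
    (ind : ModuleCat.{u} C ⥤ ModuleCat.{u} B)
    (adj : ind ⊣ ModuleCat.restrictScalars σ.toRingHom) (M : ModuleCat.{u} C) :
    ind.obj M ⟶ (ModuleCat.restrictScalars π.toRingHom).obj M :=
  (adj.homEquiv M ((ModuleCat.restrictScalars π.toRingHom).obj M)).symm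
    ((splitUnitIso σ π hsplit).hom.app M)

/-- Nilpotency of the kernel of `π : B → C`: some power of the ideal `ker π` vanishes. -/
def KerNilpotent (π : B →ₐ[k] C) : Prop :=
  ∃ n : ℕ, ∀ l : List B, (∀ x ∈ l, π x = 0) → n ≤ l.length → l.prod = 0

variable (σ : C →ₐ[k] B) (π : B →ₐ[k] C) (hsplit : π.comp σ = AlgHom.id k C)
    (ind : ModuleCat.{u} C ⥤ ModuleCat.{u} B)
    (adj : ind ⊣ ModuleCat.restrictScalars σ.toRingHom)

/-- The unit of the adjunction, viewed as a plain function into `ind.obj X`. -/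
def unitApp (X : ModuleCat.{u} C) (x : X) : ind.obj X := adj.unit.app X x

/-- The canonical map `canMap`, viewed as a plain function into `X`. -/
def thetaApp (X : ModuleCat.{u} C) (x : ind.obj X) : X := canMap σ π hsplit ind adj X x

lemma unitApp_add (X : ModuleCat.{u} C) (x y : X) :
    unitApp σ ind adj X (x + y) = unitApp σ ind adj X x + unitApp σ ind adj X y :=
  map_add (adj.unit.app X).hom x y

lemma unitApp_zero (X : ModuleCat.{u} C) : unitApp σ ind adj X 0 = 0 :=
  map_zero (adj.unit.app X).hom

lemma unitApp_smul (X : ModuleCat.{u} C) (c : C) (x : X) :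
    unitApp σ ind adj X (c • x) = σ c • unitApp σ ind adj X x :=
  map_smul (adj.unit.app X).hom c x

lemma splitUnitIso_apply (X : ModuleCat.{u} C) (x : X) :
    (splitUnitIso σ π hsplit).hom.app X x = x := by
  simp [splitUnitIso]
  rfl

lemma thetaApp_unit (X : ModuleCat.{u} C) (x : X) :
    thetaApp σ π hsplit ind adj X (unitApp σ ind adj X x) = x := by
  have h := (adj.homEquiv X ((ModuleCat.restrictScalars π.toRingHom).obj X)).apply_symm_apply
    ((splitUnitIso σ π hsplit).hom.app X)
  rw [Adjunction.homEquiv_unit] at h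
  have h2 := congr_arg (fun g => ModuleCat.Hom.hom g x) h
  exact h2.trans (splitUnitIso_apply σ π hsplit X x)

lemma thetaApp_sub (X : ModuleCat.{u} C) (x y : ind.obj X) :
    thetaApp σ π hsplit ind adj X (x - y) =
      thetaApp σ π hsplit ind adj X x - thetaApp σ π hsplit ind adj X y :=
  map_sub (canMap σ π hsplit ind adj X).hom x y

/-- Generation: any `B`-submodule of `ind.obj X` containing the image of the unit is
everything. -/
lemma span_unit (X : ModuleCat.{u} C) (W : Submodule B (ind.obj X))
    (hW : ∀ x : X, unitApp σ ind adj X x ∈ W) : W = ⊤ := by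
  let Q : ModuleCat.{u} B := ModuleCat.of B (ind.obj X ⧸ W)
  let q : ind.obj X ⟶ Q := ModuleCat.ofHom W.mkQ
  have hq : q = 0 := by
    apply (adj.homEquiv X Q).injective
    rw [Adjunction.homEquiv_unit, Adjunction.homEquiv_unit]
    refine ModuleCat.hom_ext (LinearMap.ext ?_)
    intro x
    have : q (adj.unit.app X x) = 0 := (Submodule.Quotient.mk_eq_zero W).mpr (hW x)
    exact this
  rw [Submodule.eq_top_iff']
  intro y
  have h0 := congr_arg (fun g => ModuleCat.Hom.hom g y) hq
  have : W.mkQ y = 0 := h0.trans rfl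
  rwa [Submodule.mkQ_apply, Submodule.Quotient.mk_eq_zero] at this

lemma canMap_natural {X Y : ModuleCat.{u} C} (f : X ⟶ Y) :
    ind.map f ≫ canMap σ π hsplit ind adj Y =
      canMap σ π hsplit ind adj X ≫ (ModuleCat.restrictScalars π.toRingHom).map f := by
  apply (adj.homEquiv X ((ModuleCat.restrictScalars π.toRingHom).obj Y)).injective
  rw [Adjunction.homEquiv_naturality_left, Adjunction.homEquiv_naturality_right]
  unfold canMap
  rw [Equiv.apply_symm_apply, Equiv.apply_symm_apply]
  have := (splitUnitIso σ π hsplit).hom.naturality f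
  simpa using this

lemma thetaApp_natural {X Y : ModuleCat.{u} C} (f : X ⟶ Y) (x : ind.obj X) :
    thetaApp σ π hsplit ind adj Y (ind.map f x) = f (thetaApp σ π hsplit ind adj X x) :=
  congr_arg (fun g => ModuleCat.Hom.hom g x) (canMap_natural σ π hsplit ind adj f)

lemma thetaApp_kills (X : ModuleCat.{u} C) (t : ind.obj X)
    (ht : t ∈ (RingHom.ker π.toRingHom • ⊤ : Submodule B (ind.obj X))) :
    thetaApp σ π hsplit ind adj X t = 0 := by
  refine Submodule.smul_induction_on ht ?_ ?_
  · intro e he x _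
    show canMap σ π hsplit ind adj X (e • x) = 0
    rw [map_smul, ModuleCat.restrictScalars.smul_def, RingHom.mem_ker.mp he, zero_smul]
    rfl
  · intro a b ha hb
    show canMap σ π hsplit ind adj X (a + b) = 0
    rw [map_add]
    show thetaApp σ π hsplit ind adj X a + thetaApp σ π hsplit ind adj X b = 0
    rw [ha, hb, add_zero]

include hsplit in
lemma unit_decomp (X : ModuleCat.{u} C) (x : ind.obj X) :
    ∃ q : X, x - unitApp σ ind adj X q ∈
      (RingHom.ker π.toRingHom • ⊤ : Submodule B (ind.obj X)) := by
  set T : Submodule B (ind.obj X) := RingHom.ker π.toRingHom • ⊤ with hT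
  let W : Submodule B (ind.obj X) :=
    { carrier := {x : ind.obj X | ∃ q : X, x - unitApp σ ind adj X q ∈ T}
      zero_mem' := ⟨0, by rw [unitApp_zero, sub_zero]; exact T.zero_mem⟩
      add_mem' := by
        rintro a b ⟨qa, ha⟩ ⟨qb, hb⟩
        refine ⟨qa + qb, ?_⟩
        rw [unitApp_add]
        have := T.add_mem ha hb
        convert this using 1
        abel
      smul_mem' := by
        rintro b x ⟨q, hq⟩
        refine ⟨π b • q, ?_⟩
        have h1 : unitApp σ ind adj X (π b • q) = σ (π b) • unitApp σ ind adj X q :=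
          unitApp_smul σ ind adj X (π b) q
        have h2 : b • x - unitApp σ ind adj X (π b • q)
            = σ (π b) • (x - unitApp σ ind adj X q) + (b - σ (π b)) • x := by
          rw [h1, smul_sub, sub_smul]
          abel
        rw [h2]
        refine T.add_mem (T.smul_mem _ hq) ?_
        refine Submodule.smul_mem_smul ?_ Submodule.mem_top
        rw [RingHom.mem_ker]
        have hc : π.toRingHom (σ (π b)) = π b := DFunLike.congr_fun hsplit (π b)
        rw [map_sub, hc]
        show π b - π b = 0
        rw [sub_self] }
  have hWtop : W = ⊤ := by
    refine span_unit σ ind adj X W ?_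
    intro y
    exact ⟨y, by rw [sub_self]; exact T.zero_mem⟩
  have : x ∈ W := by rw [hWtop]; trivial
  exact this

end SplitExt

section Nil
variable {k : Type u} [Field k] {B C : Type u} [Ring B] [Ring C] [Algebra k B] [Algebra k C]

lemma ker_pow_le_bot (π : B →ₐ[k] C) {n : ℕ}
    (hn : ∀ l : List B, (∀ x ∈ l, π x = 0) → n ≤ l.length → l.prod = 0) :
    (RingHom.ker π.toRingHom : Ideal B) ^ n ≤ ⊥ := by
  set E : Ideal B := RingHom.ker π.toRingHom with hE
  have key : ∀ (m : ℕ) (x : B), x ∈ E ^ m →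
      ∀ l : List B, (∀ y ∈ l, π y = 0) → n ≤ m + l.length → x * l.prod = 0 := by
    intro m
    induction m with
    | zero =>
      intro x _ l hl hlen
      rw [hn l hl (by omega), mul_zero]
    | succ m ih =>
      intro x hx l hl hlen
      rw [Submodule.pow_succ] at hx
      refine Submodule.mul_induction_on hx ?_ ?_
      · intro y hy e he
        have heq : y * e * l.prod = y * (e :: l).prod := by
          rw [List.prod_cons, ← mul_assoc]
        rw [heq]
        refine ih y hy (e :: l) ?_ (by simp; omega)
        intro z hz
        rcases List.mem_cons.mp hz with h | h
        · subst h; exact RingHom.mem_ker.mp he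
        · exact hl z h
      · intro a b ha hb
        rw [add_mul, ha, hb, add_zero]
  intro x hx
  have := key n x hx [] (by simp) (by simp)
  simpa using this

end Nil

/-- A submodule `S` is superfluous if `L ⊔ S = ⊤` implies `L = ⊤`. -/
def Superfluous {A : Type u} [Ring A] {M : Type u} [AddCommGroup M] [Module A M]
    (S : Submodule A M) : Prop :=
  ∀ L : Submodule A M, L ⊔ S = ⊤ → L = ⊤

/-- Let `B` be a split extension of a finite dimensional algebra `C` by a nilpotent
bimodule and `ind` an induction functor `- ⊗_C B` (a left adjoint of restriction along
`σ`).  If `f : P → M` is a projective cover in `mod C`, then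
`f ⊗_C 1_B : P ⊗_C B → M ⊗_C B` is a projective cover in `mod B`. -/
theorem induced_projective_cover (k : Type u) [Field k] (B C : Type u) [Ring B] [Ring C]
    [Algebra k B] [Algebra k C] [FiniteDimensional k B] [FiniteDimensional k C]
    (σ : C →ₐ[k] B) (π : B →ₐ[k] C) (hsplit : π.comp σ = AlgHom.id k C)
    (hnil : KerNilpotent π)
    (ind : ModuleCat.{u} C ⥤ ModuleCat.{u} B)
    (adj : ind ⊣ ModuleCat.restrictScalars σ.toRingHom)
    (P M : ModuleCat.{u} C) [Module.Finite C M] (f : P ⟶ M)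
    (hP : Projective P) (hepi : Function.Surjective f)
    (hmin : Superfluous (LinearMap.ker f.hom)) :
    Projective (ind.obj P) ∧ Function.Surjective (ind.map f) ∧
      Superfluous (LinearMap.ker (ind.map f).hom) := by
  haveI : (ModuleCat.restrictScalars σ.toRingHom).PreservesEpimorphisms := by
    constructor
    intro X Y g hg
    rw [ModuleCat.epi_iff_surjective] at hg ⊢
    exact hg
  -- Part 1 : projectivity
  have hproj : Projective (ind.obj P) := adj.map_projective P hP
  -- Part 2 : surjectivity
  have hsurj : Function.Surjective (ind.map f) := by
    have hrange : (LinearMap.range (ind.map f).hom : Submodule B (ind.obj M)) = ⊤ := by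
      refine span_unit σ ind adj M _ ?_
      intro m
      obtain ⟨p, rfl⟩ := hepi m
      have hnat : unitApp σ ind adj M (f p) = ind.map f (unitApp σ ind adj P p) :=
        congr_arg (fun g => ModuleCat.Hom.hom g p) (adj.unit.naturality f)
      exact ⟨unitApp σ ind adj P p, hnat.symm⟩
    intro z
    have : z ∈ LinearMap.range (ind.map f).hom := by rw [hrange]; trivial
    exact this
  refine ⟨hproj, hsurj, ?_⟩
  -- Part 3 : superfluousness
  intro L hL
  set E : Ideal B := RingHom.ker π.toRingHom with hE
  set T : Submodule B (ind.obj P) := E • ⊤ with hT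
  -- surjectivity of `ind.map f` restricted to `L`
  have hLsurj : ∀ z : ind.obj M, ∃ x ∈ L, ind.map f x = z := by
    intro z
    obtain ⟨w, hw⟩ := hsurj z
    have hwmem : w ∈ L ⊔ LinearMap.ker (ind.map f).hom := by rw [hL]; trivial
    obtain ⟨x, hx, s, hs, rfl⟩ := Submodule.mem_sup.mp hwmem
    refine ⟨x, hx, ?_⟩
    have h2 : ind.map f x + ind.map f s = z := by rw [← map_add]; exact hw
    rw [LinearMap.mem_ker.mp hs, add_zero] at h2
    exact h2
  -- the image of `L` under `θP` as a `C`-submodule of `P`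
  let L' : Submodule C P :=
    { carrier := {p : P | ∃ x ∈ L, thetaApp σ π hsplit ind adj P x = p}
      zero_mem' := ⟨0, L.zero_mem, map_zero (canMap σ π hsplit ind adj P).hom⟩
      add_mem' := by
        rintro a b ⟨x, hx, rfl⟩ ⟨y, hy, rfl⟩
        exact ⟨x + y, L.add_mem hx hy, map_add (canMap σ π hsplit ind adj P).hom x y⟩
      smul_mem' := by
        rintro c p ⟨x, hx, rfl⟩
        refine ⟨σ c • x, L.smul_mem _ hx, ?_⟩
        have h1 : thetaApp σ π hsplit ind adj P (σ c • x)
            = π.toRingHom (σ c) • thetaApp σ π hsplit ind adj P x :=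
          map_smul (canMap σ π hsplit ind adj P).hom (σ c) x
        have hc : π.toRingHom (σ c) = c := DFunLike.congr_fun hsplit c
        rw [h1, hc] }
  have hsup : L' ⊔ LinearMap.ker f.hom = ⊤ := by
    rw [Submodule.eq_top_iff']
    intro p
    obtain ⟨x, hx, hgx⟩ := hLsurj (unitApp σ ind adj M (f p))
    have h1 : f (thetaApp σ π hsplit ind adj P x) = f p := by
      rw [← thetaApp_natural σ π hsplit ind adj f x, hgx, thetaApp_unit]
    refine Submodule.mem_sup.mpr
      ⟨thetaApp σ π hsplit ind adj P x, ⟨x, hx, rfl⟩,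
        p - thetaApp σ π hsplit ind adj P x, ?_, by abel⟩
    rw [LinearMap.mem_ker, map_sub, h1, sub_self]
  have hL'top : L' = ⊤ := hmin L' hsup
  have hθL : ∀ p : P, ∃ x ∈ L, thetaApp σ π hsplit ind adj P x = p := by
    intro p
    have : p ∈ L' := by rw [hL'top]; trivial
    exact this
  -- θP computes the "q" of any decomposition
  have htheta_decomp : ∀ (y : ind.obj P) (q : P),
      y - unitApp σ ind adj P q ∈ T → thetaApp σ π hsplit ind adj P y = q := by
    intro y q hq
    have h1 : thetaApp σ π hsplit ind adj P (y - unitApp σ ind adj P q) = 0 :=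
      thetaApp_kills σ π hsplit ind adj P _ hq
    rw [thetaApp_sub, thetaApp_unit, sub_eq_zero] at h1
    exact h1
  -- main step : `⊤ = L ⊔ E • ⊤`
  have htop : L ⊔ T = ⊤ := by
    rw [Submodule.eq_top_iff']
    intro x
    obtain ⟨q, hq⟩ := unit_decomp σ π hsplit ind adj P x
    obtain ⟨y, hyL, hyq⟩ := hθL q
    obtain ⟨qy, hqy⟩ := unit_decomp σ π hsplit ind adj P y
    have hqy' : qy = q := by rw [← htheta_decomp y qy hqy, hyq]
    rw [hqy'] at hqy
    have hxy : x - y ∈ T := by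
      have h3 := T.sub_mem hq hqy
      convert h3 using 1
      abel
    exact Submodule.mem_sup.mpr ⟨y, hyL, x - y, hxy, by abel⟩
  -- power induction
  have hpow : ∀ j : ℕ, (⊤ : Submodule B (ind.obj P)) ≤ L ⊔ E ^ j • ⊤ := by
    intro j
    induction j with
    | zero =>
      rw [Submodule.pow_zero, Ideal.one_eq_top, Submodule.top_smul]
      exact le_sup_right
    | succ j ih =>
      have step : E ^ j • (⊤ : Submodule B (ind.obj P)) ≤ L ⊔ E ^ (j + 1) • ⊤ := by
        have h1 : E ^ j • (⊤ : Submodule B (ind.obj P)) = E ^ j • (L ⊔ T) := by rw [htop]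
        rw [h1, Submodule.smul_sup]
        refine sup_le (le_trans Submodule.smul_le_right le_sup_left) ?_
        have h2 : E ^ j • T = E ^ (j + 1) • (⊤ : Submodule B (ind.obj P)) := by
          rw [hT, ← Submodule.smul_assoc, Ideal.smul_eq_mul, ← Submodule.pow_succ]
        rw [h2]
        exact le_sup_right
      calc (⊤ : Submodule B (ind.obj P)) ≤ L ⊔ E ^ j • ⊤ := ih
        _ ≤ L ⊔ (L ⊔ E ^ (j + 1) • ⊤) := sup_le_sup_left step L
        _ = L ⊔ E ^ (j + 1) • ⊤ := by rw [← sup_assoc, sup_idem]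
  -- nilpotency finishes the proof
  obtain ⟨n, hn⟩ := hnil
  have hEn : E ^ n ≤ ⊥ := ker_pow_le_bot π hn
  have hbot : E ^ n • (⊤ : Submodule B (ind.obj P)) = ⊥ := by
    rw [le_bot_iff.mp hEn, Submodule.bot_smul]
  have hfin := hpow n
  rw [hbot, sup_bot_eq] at hfin
  exact eq_top_iff.mpr hfin
end
end

section
/- Let C be a finite dimensional algebra, B a split extension of C by a nilpotent bimodule E, and M a C-module with Ext¹_C(M,M) = 0. Let P₀ → M be a projective cover in mod C and suppose Hom_B(ker(P₀ ⊗_C B → P₀), M) = 0, where P₀ ⊗_C B → P₀ is the projective cover of P₀ in mod B with kernel P₀ ⊗_C E. Then Ext¹_B(M, M) = 0, i.e., M is rigid as a B-module. -/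
open CategoryTheory CategoryTheory.Limits

universe u
noncomputable section

section Aux
variable {𝒞 : Type*} [Category 𝒞] [Abelian 𝒞] [EnoughProjectives 𝒞]
variable {X P : 𝒞} (p : P ⟶ X) [Projective P] [Epi p]

set_option linter.unusedSectionVars false
lemma projD_comp {X' Y' : 𝒞} (g : X' ⟶ Y') : Projective.d g ≫ g = 0 :=
  (Category.assoc _ _ _).trans ((congrArg _ (kernel.condition g)).trans comp_zero)

/-- Auxiliary complex for a resolution starting from a given projective presentation. -/
def presCX : ChainComplex 𝒞 ℕ :=
  ChainComplex.mk' P (Projective.syzygies p) (Projective.d p)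
    (fun f => ⟨_, Projective.d f, projD_comp f⟩)

lemma presCX_d_1_0 : (presCX p).d 1 0 = Projective.d p := by simp [presCX]

lemma presCX_d_2_1 : (presCX p).d 2 1 = Projective.d (Projective.d p) := by
  show (ChainComplex.mk _ _ _ _ _ _ _).d 2 1 = _
  rw [ChainComplex.mk_d_2_1]

lemma presCX_X0 : (presCX p).X 0 = P := rfl
lemma presCX_X1 : (presCX p).X 1 = Projective.syzygies p := rfl
lemma presCX_X2 : (presCX p).X 2 = Projective.syzygies (Projective.d p) := rfl

lemma presCX_exactAt_succ (n : ℕ) : (presCX p).ExactAt (n + 1) := by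
  rw [HomologicalComplex.exactAt_iff' _ (n + 1 + 1) (n + 1) n (by simp) (by simp)]
  let α : HomologicalComplex.sc' (presCX p) (n + 1 + 1) (n + 1) n ⟶
      ShortComplex.mk _ _ (projD_comp ((presCX p).d (n + 1) n)) :=
    { τ₁ := (ChainComplex.mk'XIso P (Projective.syzygies p) (Projective.d p)
          (fun f => ⟨_, Projective.d f, projD_comp f⟩) n).hom
      τ₂ := 𝟙 _
      τ₃ := 𝟙 _
      comm₁₂ := (ChainComplex.mk'_d P (Projective.syzygies p) (Projective.d p)
          (fun f => ⟨_, Projective.d f, projD_comp f⟩) n).symm.trans (Category.comp_id _).symm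
      comm₂₃ := (Category.id_comp _).trans (Category.comp_id _).symm }
  have h1 : Epi α.τ₁ := inferInstanceAs (Epi (ChainComplex.mk'XIso P (Projective.syzygies p)
    (Projective.d p) (fun f => ⟨_, Projective.d f, projD_comp f⟩) n).hom)
  have h2 : IsIso α.τ₂ := inferInstanceAs (IsIso (𝟙 _))
  have h3 : Mono α.τ₃ := inferInstanceAs (Mono (𝟙 _))
  rw [ShortComplex.exact_iff_of_epi_of_isIso_of_mono α]
  exact exact_d_f _

instance presCX_projective (n : ℕ) : Projective ((presCX p).X n) := by
  obtain (_ | _ | _ | n) := n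
  · exact ‹Projective P›
  all_goals apply Projective.projective_over

/-- Projective resolution from a given projective presentation. -/
def presRes : ProjectiveResolution X where
  complex := presCX p
  π := (ChainComplex.toSingle₀Equiv _ _).symm ⟨p, by
          rw [presCX_d_1_0]; exact projD_comp p⟩
  quasiIso := ⟨fun n => by
    cases n
    · rw [ChainComplex.quasiIsoAt₀_iff, ShortComplex.quasiIso_iff_of_zeros']
      · refine (ShortComplex.exact_and_epi_g_iff_of_iso ?_).2 ⟨exact_d_f p, ‹Epi p›⟩
        exact ShortComplex.isoMk (Iso.refl _) (Iso.refl _) (Iso.refl _)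
          ((Category.id_comp _).trans ((presCX_d_1_0 p).symm.trans (Category.comp_id _).symm)) ((Category.id_comp _).trans ((ChainComplex.toSingle₀Equiv_symm_apply_f_zero (C := presCX p) (X := X) p _).symm.trans (Category.comp_id _).symm))
      all_goals rfl
    · rw [quasiIsoAt_iff_exactAt']
      · apply presCX_exactAt_succ
      · apply ChainComplex.exactAt_succ_single_obj⟩



end Aux

/-- `extGrp A n M N` is the Ext group `Ext^n_A(M, N)`. -/
abbrev extGrp (A : Type u) [Ring A] (n : ℕ) (M N : ModuleCat.{u} A) : ModuleCat ℤ :=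
  ((Ext ℤ (ModuleCat.{u} A) n).obj (Opposite.op M)).obj N

lemma subsingleton_iff_isZero (M : ModuleCat ℤ) : Subsingleton M ↔ IsZero M := by
  constructor
  · intro h; exact M.isZero_of_subsingleton
  · intro h
    refine ⟨fun a b => ?_⟩
    have : (𝟙 M : M ⟶ M) = 0 := h.eq_of_src _ _
    calc a = (𝟙 M : M ⟶ M) a := rfl
    _ = (0 : M ⟶ M) a := by rw [this]
    _ = (𝟙 M : M ⟶ M) b := by rw [this]; rfl
    _ = b := rfl

set_option maxHeartbeats 2000000 in
lemma ext1_subsingleton_iff {A : Type u} [Ring A] {X Y P : ModuleCat.{u} A} [Projective P]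
    (p : P ⟶ X) [Epi p] :
    Subsingleton (extGrp A 1 X Y) ↔ ∀ g : kernel p ⟶ Y, ∃ h : P ⟶ Y, kernel.ι p ≫ h = g := by
  have hD₁ : Projective.π (kernel p) ≫ kernel.ι p = Projective.d p := rfl
  have hcomp : Projective.d (Projective.d p) ≫ Projective.d p = 0 := projD_comp _
  have hD₂π' : Projective.d (Projective.d p) ≫ Projective.π (kernel p) = 0 := by
    rw [← cancel_mono (kernel.ι p)]
    exact (Category.assoc _ _ _).trans ((congrArg _ hD₁).trans (hcomp.trans zero_comp.symm))
  have hexact : (ShortComplex.mk _ _ hD₂π').Exact := by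
    let α : ShortComplex.mk _ _ hD₂π' ⟶ ShortComplex.mk _ _ hcomp :=
      { τ₁ := 𝟙 _, τ₂ := 𝟙 _, τ₃ := kernel.ι p,
        comm₁₂ := by simp, comm₂₃ := (Category.id_comp _).trans hD₁.symm }
    have h1 : Epi α.τ₁ := by dsimp [α]; infer_instance
    have h2 : IsIso α.τ₂ := by dsimp [α]; infer_instance
    have h3 : Mono α.τ₃ := by dsimp [α]; infer_instance
    rw [ShortComplex.exact_iff_of_epi_of_isIso_of_mono α]
    exact exact_d_f (Projective.d p)
  have key : Subsingleton (extGrp A 1 X Y) ↔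
      (∀ φ : (Projective.syzygies p) ⟶ Y, Projective.d (Projective.d p) ≫ φ = 0 →
        ∃ h : P ⟶ Y, Projective.d p ≫ h = φ) := by
    set K := (presCX p).linearYonedaObj ℤ Y with hK
    have E : extGrp A 1 X Y ≅ K.homology 1 := (presRes p).isoExt 1 Y
    have e1 : Subsingleton (extGrp A 1 X Y) ↔ Subsingleton (K.homology 1) :=
      Equiv.subsingleton_congr ((forget (ModuleCat ℤ)).mapIso E).toEquiv
    have hf : ∀ (h : P ⟶ Y), (HomologicalComplex.sc' K 0 1 2).f h = Projective.d p ≫ h := by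
      intro h
      rw [show (HomologicalComplex.sc' K 0 1 2).f h = (presCX p).d 1 0 ≫ h from rfl,
        presCX_d_1_0]
      rfl
    have hg : ∀ (φ : Projective.syzygies p ⟶ Y),
        (HomologicalComplex.sc' K 0 1 2).g φ = Projective.d (Projective.d p) ≫ φ := by
      intro φ
      rw [show (HomologicalComplex.sc' K 0 1 2).g φ = (presCX p).d 2 1 ≫ φ from rfl,
        presCX_d_2_1]
      rfl
    rw [e1, subsingleton_iff_isZero, ← HomologicalComplex.exactAt_iff_isZero_homology,
      HomologicalComplex.exactAt_iff' _ 0 1 2 (by simp) (by simp),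
      ShortComplex.moduleCat_exact_iff]
    constructor
    · intro H φ hφ
      obtain ⟨h, hh⟩ := H φ (by rw [hg φ]; exact hφ)
      exact ⟨h, by rw [← hf h]; exact hh⟩
    · intro H φ hφ
      rw [hg φ] at hφ
      obtain ⟨h, hh⟩ := H φ hφ
      exact ⟨h, by rw [hf h]; exact hh⟩
  rw [key]
  constructor
  · intro H g
    obtain ⟨h, hh⟩ := H (Projective.π (kernel p) ≫ g)
      ((Category.assoc _ _ _).symm.trans ((congrArg (· ≫ g) hD₂π').trans zero_comp))
    refine ⟨h, (cancel_epi (Projective.π (kernel p))).mp ?_⟩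
    rw [← Category.assoc, hD₁]
    exact hh
  · intro H φ hφ
    haveI : Epi (ShortComplex.mk _ _ hD₂π').g := Projective.π_epi (kernel p)
    obtain ⟨h, hh⟩ := H (hexact.desc φ hφ)
    refine ⟨h, ?_⟩
    rw [← hD₁]
    exact (Category.assoc _ _ _).trans ((congrArg _ hh).trans (hexact.g_desc φ hφ))

instance restrictScalars_preservesEpi {R S : Type u} [Ring R] [Ring S] (f : R →+* S) :
    (ModuleCat.restrictScalars.{u} f).PreservesEpimorphisms where
  preserves g h := by
    rw [ModuleCat.epi_iff_surjective] at h ⊢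
    exact h


set_option maxHeartbeats 1000000 in
/-- Let `B` be a split extension of a finite dimensional algebra `C` by a nilpotent
bimodule `E = ker π`, and let `M` be a rigid `C`-module with projective cover `P₀ → M` in
`mod C`.  If `Hom_B(ker(P₀ ⊗_C B → P₀), M) = 0` -- where `P₀ ⊗_C B → P₀` is the canonical
projective cover in `mod B`, whose kernel realizes `P₀ ⊗_C E` -- then `M` is rigid as a
`B`-module. -/
theorem rigid_over_B_of_hom_vanishing
    (k : Type u) [Field k] (B C : Type u) [Ring B] [Ring C] [Algebra k B] [Algebra k C]
    [FiniteDimensional k B] [FiniteDimensional k C]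
    (σ : C →ₐ[k] B) (π : B →ₐ[k] C) (hsplit : π.comp σ = AlgHom.id k C)
    (hnil : KerNilpotent π)
    (ind : ModuleCat.{u} C ⥤ ModuleCat.{u} B)
    (adj : ind ⊣ ModuleCat.restrictScalars σ.toRingHom)
    (M : ModuleCat.{u} C) [Module.Finite C M]
    (hrigid : Subsingleton (extGrp C 1 M M))
    (P₀ : ModuleCat.{u} C) (f : P₀ ⟶ M) (hP : Projective P₀)
    (hepi : Function.Surjective f) (hmin : Superfluous (LinearMap.ker f.hom))
    (hHom : ∀ g : kernel (canMap σ π hsplit ind adj P₀) ⟶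
      (ModuleCat.restrictScalars π.toRingHom).obj M, g = 0) :
    Subsingleton (extGrp B 1 ((ModuleCat.restrictScalars π.toRingHom).obj M)
      ((ModuleCat.restrictScalars π.toRingHom).obj M)) := by
  haveI hPP : Projective P₀ := hP
  haveI hEf : Epi f := (ModuleCat.epi_iff_surjective f).mpr hepi
  set c := canMap σ π hsplit ind adj P₀ with hc
  -- surjectivity of c
  have hc_eq : adj.unit.app P₀ ≫ (ModuleCat.restrictScalars σ.toRingHom).map c
      = (splitUnitIso σ π hsplit).hom.app P₀ := by
    have h := (adj.homEquiv P₀ ((ModuleCat.restrictScalars π.toRingHom).obj P₀)).apply_symm_apply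
      ((splitUnitIso σ π hsplit).hom.app P₀)
    rw [Adjunction.homEquiv_unit] at h
    exact h
  have csurj : Function.Surjective c := by
    intro z
    have hiso : IsIso ((splitUnitIso σ π hsplit).hom.app P₀) := inferInstance
    obtain ⟨a, ha⟩ := (ConcreteCategory.bijective_of_isIso (C := ModuleCat C) (X := P₀)
      (Y := (ModuleCat.restrictScalars σ.toRingHom).obj ((ModuleCat.restrictScalars π.toRingHom).obj P₀))
      ((splitUnitIso σ π hsplit).hom.app P₀)).2 z
    refine ⟨adj.unit.app P₀ a, ?_⟩
    have h2 := ConcreteCategory.congr_hom hc_eq a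
    exact h2.trans ha
  set p : ind.obj P₀ ⟶ (ModuleCat.restrictScalars π.toRingHom).obj M :=
    c ≫ (ModuleCat.restrictScalars π.toRingHom).map f with hpdef
  have hp_apply : ∀ x, p x = f (c x) := fun _ => rfl
  have psurj : Function.Surjective p := fun z => by
    obtain ⟨y, hy⟩ := hepi z
    obtain ⟨x, hx⟩ := csurj y
    exact ⟨x, by rw [hp_apply, hx, hy]⟩
  haveI hPind : Projective (ind.obj P₀) := adj.map_projective P₀ hPP
  haveI hEp : Epi p := (ModuleCat.epi_iff_surjective p).mpr psurj
  rw [ext1_subsingleton_iff p]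
  intro g
  set KB := LinearMap.ker p.hom with hKB
  set g' : ModuleCat.of B ↥KB ⟶ (ModuleCat.restrictScalars π.toRingHom).obj M :=
    (ModuleCat.kernelIsoKer p).inv ≫ g with hg'
  set gl : ↥KB →ₗ[B] ((ModuleCat.restrictScalars π.toRingHom).obj M) := g'.hom with hgl
  have hker_le : LinearMap.ker c.hom ≤ KB := fun x hx => by
    have h1 : c x = 0 := hx
    show p x = 0
    rw [hp_apply, h1]
    exact map_zero (ConcreteCategory.hom f)
  have hvanish : ∀ (x : ind.obj P₀) (hx : x ∈ LinearMap.ker c.hom), gl ⟨x, hker_le hx⟩ = 0 := by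
    intro x hx
    set ψ : ModuleCat.of B ↥(LinearMap.ker c.hom) ⟶ (ModuleCat.restrictScalars π.toRingHom).obj M :=
      ModuleCat.ofHom (Y := ↑((ModuleCat.restrictScalars π.toRingHom).obj M))
        (gl.comp (Submodule.inclusion hker_le)) with hψ
    have hzero : ψ = 0 := by
      have h0 : (ModuleCat.kernelIsoKer c).inv ≫ ((ModuleCat.kernelIsoKer c).hom ≫ ψ) = ψ := by
        rw [← Category.assoc, Iso.inv_hom_id, Category.id_comp]
      rw [← h0, hHom ((ModuleCat.kernelIsoKer c).hom ≫ ψ), comp_zero]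
    have := ConcreteCategory.congr_hom hzero (⟨x, hx⟩ : ↥(LinearMap.ker c.hom))
    exact this
  have hdiff : ∀ (x y : ind.obj P₀) (hx : x ∈ KB) (hy : y ∈ KB), c x = c y →
      gl ⟨x, hx⟩ = gl ⟨y, hy⟩ := by
    intro x y hx hy hxy
    have hmem : x - y ∈ LinearMap.ker c.hom := by
      rw [LinearMap.mem_ker, map_sub, hxy, sub_self]
    have h1 : gl ((⟨x, hx⟩ : ↥KB) - ⟨y, hy⟩) = 0 := hvanish (x - y) hmem
    rw [map_sub] at h1
    exact sub_eq_zero.mp h1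
  have hex : ∀ (y : P₀), y ∈ LinearMap.ker f.hom → ∃ x : ind.obj P₀, x ∈ KB ∧ c x = y := by
    intro y hy
    obtain ⟨x, hx⟩ := csurj y
    refine ⟨x, ?_, hx⟩
    show p x = 0
    rw [hp_apply, hx]
    exact hy
  have hπσ : ∀ a : C, π.toRingHom (σ.toRingHom a) = a := fun a => DFunLike.congr_fun hsplit a
  set gbar : ↥(LinearMap.ker f.hom) →ₗ[C] M :=
    { toFun := fun y => gl ⟨(hex y.1 y.2).choose, (hex y.1 y.2).choose_spec.1⟩
      map_add' := by
        intro y z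
        have h1 := (hex y.1 y.2).choose_spec
        have h2 := (hex z.1 z.2).choose_spec
        have h3 := (hex (y + z).1 (y + z).2).choose_spec
        refine (hdiff _ _ _ _ ?_).trans (map_add gl _ _)
        exact h3.2.trans ((map_add (ConcreteCategory.hom c) _ _).trans
          (congrArg₂ (· + ·) h1.2 h2.2)).symm
      map_smul' := by
        intro a y
        have h1 := (hex y.1 y.2).choose_spec
        have h2 := (hex (a • y).1 (a • y).2).choose_spec
        have hmem2 : σ.toRingHom a • (hex y.1 y.2).choose ∈ KB :=
          KB.smul_mem _ h1.1
        have hceq : c ((hex (a • y).1 (a • y).2).choose) =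
            c (σ.toRingHom a • (hex y.1 y.2).choose) := by
          rw [map_smul, h2.2, h1.2]
          have h7 := ModuleCat.restrictScalars.smul_def π.toRingHom (σ.toRingHom a)
            (y.1 : ↑((ModuleCat.restrictScalars π.toRingHom).obj P₀))
          rw [h7, hπσ]
          rfl
        refine (hdiff _ _ h2.1 hmem2 hceq).trans ?_
        have h5 : gl (σ.toRingHom a • (⟨(hex y.1 y.2).choose, h1.1⟩ : ↥KB)) =
            σ.toRingHom a • gl ⟨(hex y.1 y.2).choose, h1.1⟩ := map_smul gl _ _
        have h6 := ModuleCat.restrictScalars.smul_def π.toRingHom (σ.toRingHom a)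
          (gl ⟨(hex y.1 y.2).choose, h1.1⟩)
        rw [hπσ] at h6
        exact h5.trans h6 } with hgbar
  obtain ⟨h₀, hh₀⟩ := (ext1_subsingleton_iff f).mp hrigid
    ((ModuleCat.kernelIsoKer f).hom ≫ ModuleCat.ofHom gbar)
  have hrestrict : ∀ (y : P₀) (hy : y ∈ LinearMap.ker f.hom), h₀ y = gbar ⟨y, hy⟩ := by
    intro y hy
    have h1 : (ModuleCat.kernelIsoKer f).inv ≫ kernel.ι f ≫ h₀
        = ModuleCat.ofHom gbar := by
      rw [hh₀, ← Category.assoc, Iso.inv_hom_id, Category.id_comp]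
    rw [← Category.assoc, ModuleCat.kernelIsoKer_inv_kernel_ι] at h1
    exact ConcreteCategory.congr_hom h1 (⟨y, hy⟩ : ↥(LinearMap.ker f.hom))
  refine ⟨c ≫ (ModuleCat.restrictScalars π.toRingHom).map h₀, ?_⟩
  have hfinal : ∀ s : ↥KB,
      (c ≫ (ModuleCat.restrictScalars π.toRingHom).map h₀) s.1 = gl s := by
    rintro ⟨x, hx⟩
    have hcx : c x ∈ LinearMap.ker f.hom := by
      show f (c x) = 0
      exact hx
    show h₀ (c x) = gl ⟨x, hx⟩
    rw [hrestrict (c x) hcx]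
    show gl ⟨(hex (c x) hcx).choose, (hex (c x) hcx).choose_spec.1⟩ = gl ⟨x, hx⟩
    exact hdiff _ _ _ _ (hex (c x) hcx).choose_spec.2
  have h4 : (ModuleCat.ofHom (LinearMap.ker p.hom).subtype ≫ (c ≫ (ModuleCat.restrictScalars π.toRingHom).map h₀) :
      ModuleCat.of B ↥(LinearMap.ker p.hom) ⟶ (ModuleCat.restrictScalars π.toRingHom).obj M)
      = g' := ModuleCat.hom_ext (LinearMap.ext fun s => hfinal s)
  rw [← ModuleCat.kernelIsoKer_hom_ker_subtype p, Category.assoc, h4]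
  show (ModuleCat.kernelIsoKer p).hom ≫ ((ModuleCat.kernelIsoKer p).inv ≫ g) = g
  rw [← Category.assoc, Iso.hom_inv_id, Category.id_comp]
end
end

section
/- Let C be an algebra of global dimension 2, E = Ext²_C(DC,C), B = C ⋉ E, and M a C-module with projective cover g : P₀ → M in mod C such that M is rigid as a B-module and Ext¹_B(P₀, M) = 0. Then Hom_C(P₀ ⊗_C E, M) = 0. -/
open CategoryTheory CategoryTheory.Limits

universe u
noncomputable section

/-- `pdLE A n M` : `M` admits a projective resolution of length at most `n`. -/
def pdLE (A : Type u) [Ring A] : ℕ → ModuleCat.{u} A → Prop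
  | 0, M => Projective M
  | n+1, M => ∃ (P : ModuleCat.{u} A) (f : P ⟶ M), Projective P ∧ Epi f ∧ pdLE A n (kernel f)

/-- The projective dimension of a module, as an element of `ℕ∞` (`⊤` if infinite). -/
def pd (A : Type u) [Ring A] (M : ModuleCat.{u} A) : ℕ∞ :=
  sInf {n : ℕ∞ | ∃ m : ℕ, n = (m : ℕ∞) ∧ pdLE A m M}

/-- The left `C`-module structure on `D C = Hom_k(C, k)`: `(c • f) x = f (x * c)`. -/
instance dualSMul (k : Type u) [Field k] (C : Type u) [Ring C] [Algebra k C] :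
    SMul C (Module.Dual k C) :=
  ⟨fun c f => f.comp (LinearMap.mulRight k c)⟩

lemma dual_smul_apply {k : Type u} [Field k] {C : Type u} [Ring C] [Algebra k C]
    (c : C) (f : Module.Dual k C) (x : C) : (c • f) x = f (x * c) := rfl

instance dualModule (k : Type u) [Field k] (C : Type u) [Ring C] [Algebra k C] :
    Module C (Module.Dual k C) where
  one_smul f := LinearMap.ext fun x => by rw [dual_smul_apply, mul_one]
  mul_smul c d f := LinearMap.ext fun x => by
    simp only [dual_smul_apply, mul_assoc]
  smul_zero c := LinearMap.ext fun x => rfl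
  smul_add c f g := LinearMap.ext fun x => rfl
  add_smul c d f := LinearMap.ext fun x => by
    simp only [dual_smul_apply, mul_add, map_add, LinearMap.add_apply]
  zero_smul f := LinearMap.ext fun x => by
    simp only [dual_smul_apply, mul_zero, map_zero, LinearMap.zero_apply]

/-- `D C` as an object of `mod C`. -/
def DCmod (k : Type u) [Field k] (C : Type u) [Ring C] [Algebra k C] : ModuleCat.{u} C :=
  ModuleCat.of C (Module.Dual k C)

/-- The regular module `C` in `mod C`. -/
def Creg (C : Type u) [Ring C] : ModuleCat.{u} C := ModuleCat.of C C

/-- Right multiplication by `c` as an endomorphism of the regular module. -/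
def rmul (C : Type u) [Ring C] (c : C) : Creg C ⟶ Creg C :=
  ModuleCat.ofHom
    { toFun := fun x => x * c
      map_add' := fun x y => add_mul x y c
      map_smul' := fun d x => mul_assoc d x c }

/-- The endomorphism of `D C` induced by right multiplication of `C` on itself in the
contravariant variable: `(rdual c f) x = f (c * x)`. -/
def rdual (k : Type u) [Field k] (C : Type u) [Ring C] [Algebra k C] (c : C) :
    DCmod k C ⟶ DCmod k C :=
  ModuleCat.ofHom
  { toFun := fun f => f.comp (LinearMap.mulLeft k c)
    map_add' := fun f g => LinearMap.ext fun x => rfl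
    map_smul' := fun d f => LinearMap.ext fun x =>
      show f ((c * x) * d) = f (c * (x * d)) from by rw [mul_assoc] }

/-- The bimodule `E = Ext²_C(DC, C)`, as an abelian group. -/
def E2 (k : Type u) [Field k] (C : Type u) [Ring C] [Algebra k C] : ModuleCat ℤ :=
  ((Ext ℤ (ModuleCat.{u} C) 2).obj (Opposite.op (DCmod k C))).obj (Creg C)

/-- The left action of `c : C` on `Ext²_C(DC, C)`, by functoriality in the first variable. -/
def E2left (k : Type u) [Field k] (C : Type u) [Ring C] [Algebra k C] (c : C) :
    E2 k C ⟶ E2 k C :=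
  ((Ext ℤ (ModuleCat.{u} C) 2).map (Quiver.Hom.op (rdual k C c))).app (Creg C)

/-- The right action of `c : C` on `Ext²_C(DC, C)`, by functoriality in the second
variable. -/
def E2right (k : Type u) [Field k] (C : Type u) [Ring C] [Algebra k C] (c : C) :
    E2 k C ⟶ E2 k C :=
  ((Ext ℤ (ModuleCat.{u} C) 2).obj (Opposite.op (DCmod k C))).map (rmul C c)

/-- `B` is the relation extension (trivial extension) `C ⋉ Ext²_C(DC, C)` of `C`:
it is a split extension of `C`, the kernel `E = ker π` has square zero, and `E` is
isomorphic, compatibly with both `C`-actions, to the bimodule `Ext²_C(DC, C)`.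
When `C` is tilted, this says exactly that `B` is the corresponding cluster-tilted
algebra. -/
def IsRelationExtension {k : Type u} [Field k] {B C : Type u} [Ring B] [Ring C]
    [Algebra k B] [Algebra k C] (σ : C →ₐ[k] B) (π : B →ₐ[k] C) : Prop :=
  π.comp σ = AlgHom.id k C ∧
  (∀ x y : B, π x = 0 → π y = 0 → x * y = 0) ∧
  ∃ e : RingHom.ker π.toRingHom ≃+ E2 k C,
    (∀ (c : C) (x : RingHom.ker π.toRingHom),
      e ⟨σ c * x.1, by
        have hx := x.2
        rw [RingHom.mem_ker] at hx ⊢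
        rw [map_mul, hx, mul_zero]⟩ = E2left k C c (e x)) ∧
    (∀ (c : C) (x : RingHom.ker π.toRingHom),
      e ⟨x.1 * σ c, by
        have hx := x.2
        rw [RingHom.mem_ker] at hx ⊢
        rw [map_mul, hx, zero_mul]⟩ = E2right k C c (e x))

section AuxRes
open CategoryTheory.Projective

namespace AuxRes
variable {V : Type*} [Category V] [Abelian V] [EnoughProjectives V]
variable {Z P : V} (p : P ⟶ Z) [Projective P] [Epi p]

/-- A projective resolution complex starting with a given projective presentation. -/
def ofComplex' : ChainComplex V ℕ :=
  ChainComplex.mk' P (syzygies p) (d p)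
    (fun f => ⟨_, d f, by
      exact (Category.assoc _ _ _).trans ((congrArg (π (kernel f) ≫ ·) (kernel.condition f)).trans comp_zero)⟩)

omit [Projective P] [Epi p] in
lemma ofComplex'_d_1_0 : (ofComplex' p).d 1 0 = d p := by
  simp [ofComplex']

omit [Projective P] [Epi p] in
lemma ofComplex'_d_2_1 : (ofComplex' p).d 2 1 = d (d p) := by
  apply ChainComplex.mk_d_2_1

omit [Projective P] [Epi p] in
lemma ofComplex'_exactAt_succ (n : ℕ) : (ofComplex' p).ExactAt (n + 1) := by
  rw [HomologicalComplex.exactAt_iff' _ (n + 1 + 1) (n + 1) n (by simp) (by simp)]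
  refine (ShortComplex.exact_iff_of_iso ?_).1 (exact_d_f ((ofComplex' p).d (n + 1) n))
  refine ShortComplex.isoMk (ChainComplex.mk'XIso P (syzygies p) (d p) (fun f => ⟨_, d f, (Category.assoc _ _ _).trans ((congrArg (π (kernel f) ≫ ·) (kernel.condition f)).trans comp_zero)⟩) n).symm (Iso.refl _) (Iso.refl _) ?_ ?_
  · refine Eq.trans ?_ (Category.comp_id _).symm
    exact (congrArg ((ChainComplex.mk'XIso P (syzygies p) (d p) (fun f => ⟨_, d f, (Category.assoc _ _ _).trans ((congrArg (π (kernel f) ≫ ·) (kernel.condition f)).trans comp_zero)⟩) n).inv ≫ ·) (ChainComplex.mk'_d P (syzygies p) (d p) (fun f => ⟨_, d f, (Category.assoc _ _ _).trans ((congrArg (π (kernel f) ≫ ·) (kernel.condition f)).trans comp_zero)⟩) n)).trans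
      (Iso.inv_hom_id_assoc _ _)
  · exact (Category.id_comp _).trans (Category.comp_id _).symm

instance (n : ℕ) : Projective ((ofComplex' p).X n) := by
  obtain (_ | _ | _ | n) := n
  · exact (inferInstance : Projective P)
  all_goals apply Projective.projective_over

/-- The projective resolution built on a given projective presentation. -/
def res : ProjectiveResolution Z where
  complex := ofComplex' p
  π := (ChainComplex.toSingle₀Equiv _ _).symm ⟨p, by
          rw [ofComplex'_d_1_0]; dsimp only [d]
          exact (Category.assoc _ _ _).trans ((congrArg (π (kernel p) ≫ ·) (kernel.condition p)).trans comp_zero)⟩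
  quasiIso := ⟨fun n => by
    cases n
    · rw [ChainComplex.quasiIsoAt₀_iff, ShortComplex.quasiIso_iff_of_zeros']
      · refine (ShortComplex.exact_and_epi_g_iff_of_iso ?_).2
          ⟨exact_d_f p, by dsimp; infer_instance⟩
        exact ShortComplex.isoMk (Iso.refl _) (Iso.refl _) (Iso.refl _)
          (by exact (Category.id_comp _).trans ((ofComplex'_d_1_0 p).symm.trans (Category.comp_id _).symm))
          (by exact (Category.id_comp _).trans ((ChainComplex.toSingle₀Equiv_symm_apply_f_zero (C := ofComplex' p) p _).symm.trans (Category.comp_id _).symm))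
      all_goals rfl
    · rw [quasiIsoAt_iff_exactAt']
      · apply ofComplex'_exactAt_succ
      · apply ChainComplex.exactAt_succ_single_obj⟩

variable {A : Type u} [Ring A] {Z P M' : ModuleCat.{u} A} (p : P ⟶ Z) [Projective P] [Epi p]

/-- If `Ext¹(Z, M') = 0` then every map from `ker p` to `M'` extends along
`kernel.ι p : ker p ⟶ P`. -/
lemma extend_of_ext1_zero
    (hext : Subsingleton (((Ext ℤ (ModuleCat.{u} A) 1).obj (Opposite.op Z)).obj M'))
    (t : (kernel p : ModuleCat.{u} A) ⟶ M') :
    ∃ y : P ⟶ M', kernel.ι p ≫ y = t := by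
  let R := res p
  let CC := R.complex.linearYonedaObj ℤ M'
  haveI : Subsingleton ((CC.homology 1) : Type u) := by
    have e := (R.isoExt (R := ℤ) 1 M')
    exact @Equiv.subsingleton _ _ (((forget (ModuleCat ℤ)).mapIso e.symm).toEquiv) hext
  have hz : IsZero (CC.homology 1) := ModuleCat.isZero_of_subsingleton _
  have hex : CC.ExactAt 1 := (CC.exactAt_iff_isZero_homology 1).2 hz
  rw [HomologicalComplex.exactAt_iff' CC 0 1 2 (by simp) (by simp)] at hex
  have hex' := (ShortComplex.moduleCat_exact_iff _).1 hex
  let x : (CC.sc' 0 1 2).X₂ := (π (kernel p) ≫ t : syzygies p ⟶ M')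
  have hgx : (CC.sc' 0 1 2).g x = 0 := by
    show CC.d 1 2 x = 0
    have h1 : CC.d 1 2 x = R.complex.d 2 1 ≫ (π (kernel p) ≫ t) := rfl
    rw [h1]
    have h2 : (R.complex.d 2 1 ≫ π (kernel p)) ≫ kernel.ι p = 0 := by
      refine (Category.assoc _ _ _).trans ?_
      show R.complex.d 2 1 ≫ R.complex.d 1 0 = 0
      simp
    have h0 : R.complex.d 2 1 ≫ π (kernel p) = 0 := by
      rwa [← cancel_mono (kernel.ι p), zero_comp]
    exact (Category.assoc _ _ _).symm.trans ((congrArg (· ≫ t) h0).trans zero_comp)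
  obtain ⟨y, hy⟩ := hex' x hgx
  refine ⟨(y : P ⟶ M'), ?_⟩
  have hy' : d p ≫ (y : P ⟶ M') = π (kernel p) ≫ t := by
    have e10 : R.complex.d 1 0 = d p := ofComplex'_d_1_0 p
    have h3 := hy
    rw [show (CC.sc' 0 1 2).f y = R.complex.d 1 0 ≫ (y : P ⟶ M') from rfl, e10] at h3
    exact h3
  exact (cancel_epi (π (kernel p))).1 ((Category.assoc _ _ _).symm.trans hy')

end AuxRes
end AuxRes

/-- Let `C` be an algebra of global dimension 2, `B = C ⋉ Ext²_C(DC, C)` the relation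
extension, and `M` a `C`-module with projective cover `g : P₀ → M` in `mod C` such that
`M` is rigid as a `B`-module.  If moreover `Ext¹_B(P₀, M) = 0`, then
`Hom_C(P₀ ⊗_C E, M) = 0`, where `P₀ ⊗_C E` is the kernel of the canonical map
`P₀ ⊗_C B → P₀`, viewed as a `C`-module by restriction along `σ`. -/

theorem hom_tensor_E_eq_zero
    (k : Type u) [Field k] (B C : Type u) [Ring B] [Ring C] [Algebra k B] [Algebra k C]
    [FiniteDimensional k B] [FiniteDimensional k C]
    (σ : C →ₐ[k] B) (π : B →ₐ[k] C) (hrel : IsRelationExtension σ π)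
    (hsplit : π.comp σ = AlgHom.id k C)
    (hgl : ∀ N : ModuleCat.{u} C, pd C N ≤ 2) (hgl2 : ∃ N : ModuleCat.{u} C, pd C N = 2)
    (ind : ModuleCat.{u} C ⥤ ModuleCat.{u} B)
    (adj : ind ⊣ ModuleCat.restrictScalars σ.toRingHom)
    (M : ModuleCat.{u} C) [Module.Finite C M]
    (P₀ : ModuleCat.{u} C) (g : P₀ ⟶ M) (hP : Projective P₀)
    (hepi : Function.Surjective g) (hmin : Superfluous (LinearMap.ker g.hom))
    (hrigidB : Subsingleton (extGrp B 1 ((ModuleCat.restrictScalars π.toRingHom).obj M)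
      ((ModuleCat.restrictScalars π.toRingHom).obj M)))
    (hExtP : Subsingleton (extGrp B 1 ((ModuleCat.restrictScalars π.toRingHom).obj P₀)
      ((ModuleCat.restrictScalars π.toRingHom).obj M))) :
    ∀ h : (ModuleCat.restrictScalars σ.toRingHom).obj
        (kernel (canMap σ π hsplit ind adj P₀)) ⟶ M, h = 0 := by
    classical
  intro h
  haveI := hP
  let rsig := ModuleCat.restrictScalars.{u} σ.toRingHom
  let rpi := ModuleCat.restrictScalars.{u} π.toRingHom
  let p : ind.obj P₀ ⟶ rpi.obj P₀ := canMap σ π hsplit ind adj P₀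
  let w : P₀ ⟶ rsig.obj (rpi.obj P₀) := (splitUnitIso σ π hsplit).hom.app P₀
  let winv : rsig.obj (rpi.obj P₀) ⟶ P₀ := (splitUnitIso σ π hsplit).inv.app P₀
  let η : P₀ ⟶ rsig.obj (ind.obj P₀) := adj.unit.app P₀
  have hsig : ∀ c : C, π.toRingHom (σ.toRingHom c) = c := fun c => DFunLike.congr_fun hsplit c
  -- the unit identity : η ≫ rsig.map p = w
  have hw : η ≫ rsig.map p = w := by
    rw [show rsig.map p = (ModuleCat.restrictScalars σ.toRingHom).map p from rfl,
      ← Adjunction.homEquiv_unit]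
    exact (adj.homEquiv P₀ (rpi.obj P₀)).apply_symm_apply w
  have hw' : ∀ m : P₀, p (η m) = w m := by
    intro m
    have := ConcreteCategory.congr_hom hw m
    exact this
  have hwwinv : ∀ q : rsig.obj (rpi.obj P₀), w (winv q) = q := by
    intro q
    have h1 : winv ≫ w = 𝟙 _ := (splitUnitIso σ π hsplit).inv_hom_id_app P₀
    have := ConcreteCategory.congr_hom h1 q
    simpa using this
  have hwinvw : ∀ m : P₀, winv (w m) = m := by
    intro m
    have h1 : w ≫ winv = 𝟙 _ := (splitUnitIso σ π hsplit).hom_inv_id_app P₀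
    have := ConcreteCategory.congr_hom h1 m
    simpa using this
  -- p is epi
  haveI hepi_p : Epi p := by
    rw [ModuleCat.epi_iff_surjective]
    intro q
    exact ⟨η (winv q), by rw [hw']; exact hwwinv q⟩
  -- ind.obj P₀ is projective
  haveI hproj : Projective (ind.obj P₀) := by
    refine ⟨fun {X Y} f e he => ?_⟩
    haveI : Epi ((ModuleCat.restrictScalars σ.toRingHom).map e) := by
      rw [ModuleCat.epi_iff_surjective]
      intro y
      obtain ⟨x, hx⟩ := (ModuleCat.epi_iff_surjective e).1 he y
      exact ⟨x, hx⟩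
    obtain ⟨ℓ, hℓ⟩ := Projective.factors (adj.homEquiv P₀ Y f)
      ((ModuleCat.restrictScalars σ.toRingHom).map e)
    refine ⟨(adj.homEquiv P₀ X).symm ℓ, ?_⟩
    apply (adj.homEquiv P₀ Y).injective
    rw [Adjunction.homEquiv_naturality_right, Equiv.apply_symm_apply, hℓ]
  -- the kernel of π kills (the kernel of) p
  have hEK : ∀ z : ind.obj P₀, p z = 0 → ∀ e : B, π.toRingHom e = 0 → e • z = 0 := by
    have key : ∀ z : ind.obj P₀, ∀ e : B, π.toRingHom e = 0 →
        e • z = e • (η (winv (p z))) := by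
      let S : Submodule B (ind.obj P₀) :=
        { carrier := {z | ∀ e : B, π.toRingHom e = 0 → e • z = e • (η (winv (p z)))}
          add_mem' := by
            intro x y hx hy e he
            have h1 : p (x + y) = p x + p y := map_add p.hom x y
            have h2 : winv (p (x + y)) = winv (p x) + winv (p y) :=
              (congrArg winv h1).trans (map_add winv.hom (p x) (p y))
            rw [smul_add, hx e he, hy e he, h2]
            erw [map_add, smul_add]
            rfl
          zero_mem' := by
            intro e he
            rw [smul_zero]
            erw [map_zero, map_zero]
            exact (smul_zero e).symm
          smul_mem' := by
            intro b z hz e he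
            have hsb : π.toRingHom (e * σ.toRingHom (π.toRingHom b)) = 0 := by
              rw [map_mul, he, zero_mul]
            have heb : e * b = e * σ.toRingHom (π.toRingHom b) := by
              have h0 : e * (b - σ.toRingHom (π.toRingHom b)) = 0 :=
                hrel.2.1 e _ he (by rw [map_sub]; exact sub_eq_zero.mpr (hsig (π.toRingHom b)).symm)
              rw [mul_sub, sub_eq_zero] at h0
              exact h0
            have hL : e • (b • z) = (e * σ.toRingHom (π.toRingHom b)) • z := by
              rw [smul_smul, heb]
            replace hz : ∀ e : B, π.toRingHom e = 0 → e • z = e • η (winv (p z)) := hz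
            rw [hL, hz _ hsb]
            have hRHS : winv (p (b • z)) = (π.toRingHom b) • winv (p z) := by
              have h3 := winv.hom.map_smul (π.toRingHom b) (p z)
              have h3' : winv (π.toRingHom (σ.toRingHom (π.toRingHom b)) • (p z : ↑P₀)) =
                  π.toRingHom b • winv (p z) := h3
              rw [hsig] at h3'
              have hmid : p (b • z) = (π.toRingHom b • (p z : ↑P₀) : ↑P₀) := p.hom.map_smul b z
              exact (congrArg (⇑winv) hmid).trans h3'
            rw [hRHS]
            rw [mul_smul]
            congr 1
            exact (η.hom.map_smul (π.toRingHom b) (winv (p z))).symm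
        }
      have hgen : Submodule.span B (Set.range η) = ⊤ := by
        by_contra hne
        set W := Submodule.span B (Set.range (η : P₀ → ind.obj P₀)) with hW
        let qm : ind.obj P₀ ⟶ ModuleCat.of B (ind.obj P₀ ⧸ W) := ModuleCat.ofHom W.mkQ
        have hqm : adj.homEquiv P₀ (ModuleCat.of B (ind.obj P₀ ⧸ W)) qm =
            adj.homEquiv P₀ (ModuleCat.of B (ind.obj P₀ ⧸ W)) 0 := by
          rw [Adjunction.homEquiv_unit, Adjunction.homEquiv_unit]
          ext m
          have hmem : η m ∈ W := Submodule.subset_span ⟨m, rfl⟩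
          have h1 : qm (η m) = 0 := (Submodule.Quotient.mk_eq_zero W).2 hmem
          exact h1
        have hqm0 : qm = 0 := (adj.homEquiv _ _).injective hqm
        have : ∀ z : ind.obj P₀, z ∈ W := by
          intro z
          have := ConcreteCategory.congr_hom hqm0 z
          exact (Submodule.Quotient.mk_eq_zero W).1 this
        exact hne (Submodule.eq_top_iff'.2 this)
      have hle : ∀ z : ind.obj P₀, z ∈ S := by
        intro z
        have : z ∈ Submodule.span B (Set.range (η : P₀ → ind.obj P₀)) := by rw [hgen]; exact True.intro
        refine Submodule.span_le.2 ?_ this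
        rintro _ ⟨m, rfl⟩
        intro e he
        have : winv (p (η m)) = m := by rw [hw' m, hwinvw m]
        rw [this]
        rfl
      intro z e he
      exact hle z e he
    intro z hz e he
    have := key z e he
    rw [hz] at this
    erw [this, map_zero]
    exact smul_zero (A := (ind.obj P₀).carrier) e
  -- B-linearize h
  let K := kernel p
  have hι : ∀ x : K, ∀ e : B, π.toRingHom e = 0 → e • x = 0 := by
    intro x e he
    have hmono : Function.Injective (kernel.ι p) :=
      (ModuleCat.mono_iff_injective (kernel.ι p)).1 inferInstance
    apply hmono
    show (kernel.ι p).hom (e • x) = (kernel.ι p).hom 0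
    rw [map_smul, map_zero]
    refine hEK (kernel.ι p x) ?_ e he
    simpa using ConcreteCategory.congr_hom (kernel.condition p) x
  let M' := rpi.obj M
  let ht : K ⟶ M' := ModuleCat.ofHom (X := K) (Y := M')
    { toFun := fun x => h x
      map_add' := fun x y => h.hom.map_add x y
      map_smul' := by
        intro b x
        have hdec : b • x = σ.toRingHom (π.toRingHom b) • x := by
          have h0 : (b - σ.toRingHom (π.toRingHom b)) • x = 0 := by
            refine hι x _ ?_
            rw [map_sub]
            exact sub_eq_zero.mpr (hsig (π.toRingHom b)).symm
          rw [sub_smul] at h0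
          have h1 := sub_eq_zero.mp h0
          rw [h1]
        have hmap := h.hom.map_smul (π.toRingHom b) x
        show h (b • x) = _
        rw [hdec]
        exact hmap }
  -- extend ht along kernel.ι p using Ext¹ vanishing
  obtain ⟨y, hy⟩ := AuxRes.extend_of_ext1_zero p hExtP ht
  -- every B-map (ind.obj P₀) ⟶ M' factors through p
  have hfac : y = p ≫ rpi.map ((adj.homEquiv P₀ M') y ≫ (splitUnitIso σ π hsplit).inv.app M) := by
    apply (adj.homEquiv P₀ M').injective
    rw [Adjunction.homEquiv_naturality_right]
    have h1 : adj.homEquiv P₀ (rpi.obj P₀) p = w := (adj.homEquiv _ _).apply_symm_apply w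
    rw [h1]
    have h2 := ((splitUnitIso σ π hsplit).hom.naturality
      ((adj.homEquiv P₀ M') y ≫ (splitUnitIso σ π hsplit).inv.app M))
    simp only [Functor.id_map] at h2
    calc w ≫ (ModuleCat.restrictScalars σ.toRingHom).map (rpi.map
          ((adj.homEquiv P₀ M') y ≫ (splitUnitIso σ π hsplit).inv.app M))
        = (splitUnitIso σ π hsplit).hom.app P₀ ≫
            (ModuleCat.restrictScalars π.toRingHom ⋙ ModuleCat.restrictScalars σ.toRingHom).map
            ((adj.homEquiv P₀ M') y ≫ (splitUnitIso σ π hsplit).inv.app M) := rfl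
      _ = ((adj.homEquiv P₀ M') y ≫ (splitUnitIso σ π hsplit).inv.app M) ≫
            (splitUnitIso σ π hsplit).hom.app M := h2.symm
      _ = (adj.homEquiv P₀ M') y := by
            simp only [Category.assoc, Iso.inv_hom_id_app]
            exact Category.comp_id _
  have hty : ht = 0 := by
    rw [← hy, hfac, ← Category.assoc]
    rw [kernel.condition]
    rw [zero_comp]
  ext x
  have := ConcreteCategory.congr_hom hty x
  exact this
end
end
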